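/- If the profile function is affine in the coordinates, i.e. h(x) = c + Σ_μ c_μ x^μ for real constants c, c_0, …, c_{n−1}, then the plane-fronted metric is flat: its full Riemann tensor R^α_{βγδ} vanishes identically on ℝ^n (even though for c_0 ≠ 0 the Christoffel symbols are not constant). -/

import Mathlib

noncomputable section

/-- Partial derivative of a function on `ℝ^n` in the `μ`-th coordinate direction. -/
def pd {n : ℕ} (μ : Fin n) (f : (Fin n → ℝ) → ℝ) : (Fin n → ℝ) → ℝ :=
  fun p => fderiv ℝ f p (Pi.single μ 1)

/-- Embedding of a transverse index `a ∈ {0,…,m-1}` as the coordinate index `a+2`. -/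
def tIdx {m : ℕ} (a : Fin m) : Fin (m + 2) := a.succ.succ

/-- Covariant components `g_{αβ}` of the plane-fronted metric. -/
def gLow (m : ℕ) (η : Matrix (Fin m) (Fin m) ℝ) (h : (Fin (m + 2) → ℝ) → ℝ)
    (p : Fin (m + 2) → ℝ) (α β : Fin (m + 2)) : ℝ :=
  (if (α = 0 ∧ β = 1) ∨ (α = 1 ∧ β = 0) then 1 else 0)
    + (if α = 1 ∧ β = 1 then 2 * h p else 0)
    + ∑ a : Fin m, ∑ b : Fin m, if α = tIdx a ∧ β = tIdx b then η a b else 0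

/-- Contravariant components `g^{αβ}` of the plane-fronted metric. -/
def gUp (m : ℕ) (ηinv : Matrix (Fin m) (Fin m) ℝ) (h : (Fin (m + 2) → ℝ) → ℝ)
    (p : Fin (m + 2) → ℝ) (α β : Fin (m + 2)) : ℝ :=
  (if (α = 0 ∧ β = 1) ∨ (α = 1 ∧ β = 0) then 1 else 0)
    + (if α = 0 ∧ β = 0 then -(2 * h p) else 0)
    + ∑ a : Fin m, ∑ b : Fin m, if α = tIdx a ∧ β = tIdx b then ηinv a b else 0

/-- Christoffel symbols `Γ^α_{βγ}` of the plane-fronted metric. -/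
def chr (m : ℕ) (η ηinv : Matrix (Fin m) (Fin m) ℝ) (h : (Fin (m + 2) → ℝ) → ℝ)
    (p : Fin (m + 2) → ℝ) (α β γ : Fin (m + 2)) : ℝ :=
  (1 / 2) * ∑ δ : Fin (m + 2), gUp m ηinv h p α δ *
    (pd β (fun q => gLow m η h q δ γ) p + pd γ (fun q => gLow m η h q δ β) p
      - pd δ (fun q => gLow m η h q β γ) p)

/-- Riemann curvature tensor `R^α_{βγδ}` of the plane-fronted metric. -/
def riem (m : ℕ) (η ηinv : Matrix (Fin m) (Fin m) ℝ) (h : (Fin (m + 2) → ℝ) → ℝ)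
    (p : Fin (m + 2) → ℝ) (α β γ δ : Fin (m + 2)) : ℝ :=
  pd γ (fun q => chr m η ηinv h q α δ β) p - pd δ (fun q => chr m η ηinv h q α γ β) p
    + ∑ ε : Fin (m + 2), (chr m η ηinv h p α γ ε * chr m η ηinv h p ε δ β
      - chr m η ηinv h p α δ ε * chr m η ηinv h p ε γ β)

/-- Ricci tensor `R_{βδ}` of the plane-fronted metric. -/
def ricci (m : ℕ) (η ηinv : Matrix (Fin m) (Fin m) ℝ) (h : (Fin (m + 2) → ℝ) → ℝ)
    (p : Fin (m + 2) → ℝ) (β δ : Fin (m + 2)) : ℝ :=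
  ∑ α : Fin (m + 2), riem m η ηinv h p α β α δ

/-- Contravariant components `k^α = δ^α_0` of the null vector `k`. -/
def kUp {m : ℕ} (α : Fin (m + 2)) : ℝ := if α = 0 then 1 else 0

/-- Covariant components `k_α = δ^1_α` of the null vector `k`. -/
def kDown {m : ℕ} (α : Fin (m + 2)) : ℝ := if α = 1 then 1 else 0

/-- Covariant derivative `D_α k_β = −Σ_γ Γ^γ_{αβ} k_γ` of the constant-component
null covector `k`. -/
def covDk (m : ℕ) (η ηinv : Matrix (Fin m) (Fin m) ℝ) (h : (Fin (m + 2) → ℝ) → ℝ)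
    (p : Fin (m + 2) → ℝ) (α β : Fin (m + 2)) : ℝ :=
  - ∑ γ : Fin (m + 2), chr m η ηinv h p γ α β * kDown γ

section AuxStmt14
variable {m : ℕ}

lemma t_ne_zero (a : Fin m) : tIdx a ≠ (0 : Fin (m+2)) := Fin.succ_ne_zero _
lemma t_ne_one (a : Fin m) : tIdx a ≠ (1 : Fin (m+2)) := by
  simp [tIdx, Fin.ext_iff, Fin.val_succ]
lemma t_inj {a b : Fin m} : tIdx a = tIdx b ↔ a = b := by
  simp [tIdx, Fin.succ_inj]
lemma fzero_ne_one : (0 : Fin (m+2)) ≠ 1 := by simp [Fin.ext_iff]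
lemma fone_ne_zero : (1 : Fin (m+2)) ≠ 0 := by simp [Fin.ext_iff]

lemma pd_affine (c A B : ℝ) (cv : Fin (m+2) → ℝ) (μ : Fin (m+2)) (p : Fin (m+2) → ℝ) :
    pd μ (fun q => A + B * (c + ∑ ν, cv ν * q ν)) p = B * cv μ := by
  have h1 : (fun q : Fin (m+2) → ℝ => A + B * (c + ∑ ν, cv ν * q ν))
      = fun q => (A + B * c) + ∑ ν, (B * cv ν) * q ν := by
    funext q
    rw [show (∑ ν, (B * cv ν) * q ν) = B * ∑ ν, cv ν * q ν by
      rw [Finset.mul_sum]; exact Finset.sum_congr rfl fun ν _ => (mul_assoc _ _ _)]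
    ring
  have h2 : HasFDerivAt (fun q : Fin (m+2) → ℝ => (A + B*c) + ∑ ν, (B * cv ν) * q ν)
      (∑ ν : Fin (m+2), (B * cv ν) • (ContinuousLinearMap.proj (R := ℝ) (φ := fun _ : Fin (m+2) => ℝ) ν)) p := by
    apply HasFDerivAt.const_add
    apply HasFDerivAt.fun_sum
    intro ν _
    exact ((B * cv ν) • ContinuousLinearMap.proj (R := ℝ) (φ := fun _ : Fin (m+2) => ℝ) ν).hasFDerivAt
  unfold pd
  rw [h1, h2.fderiv]
  simp [ContinuousLinearMap.sum_apply, ContinuousLinearMap.proj_apply, Pi.single_apply,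
    mul_ite, Finset.sum_ite_eq, Finset.sum_ite_eq']

lemma pd_gLow (η : Matrix (Fin m) (Fin m) ℝ) (c : ℝ) (cv : Fin (m+2) → ℝ)
    (μ δ γ : Fin (m+2)) (p : Fin (m+2) → ℝ) :
    pd μ (fun q => gLow m η (fun r => c + ∑ ν, cv ν * r ν) q δ γ) p
      = if δ = 1 ∧ γ = 1 then 2 * cv μ else 0 := by
  have h1 : (fun q => gLow m η (fun r => c + ∑ ν, cv ν * r ν) q δ γ)
      = fun q => (((if (δ = 0 ∧ γ = 1) ∨ (δ = 1 ∧ γ = 0) then 1 else 0)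
          + ∑ a : Fin m, ∑ b : Fin m, if δ = tIdx a ∧ γ = tIdx b then η a b else 0)
        + (if δ = 1 ∧ γ = 1 then 2 else 0) * (c + ∑ ν, cv ν * q ν)) := by
    funext q
    simp only [gLow]
    split_ifs <;> ring
  rw [h1, pd_affine]
  split_ifs <;> ring

def Kfun (m : ℕ) (ηinv : Matrix (Fin m) (Fin m) ℝ) (cv : Fin (m+2) → ℝ) (α : Fin (m+2)) : ℝ :=
  (if α = 1 then -cv 0 else 0)
    - ∑ a : Fin m, if α = tIdx a then (∑ b : Fin m, ηinv a b * cv (tIdx b)) else 0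

def Gam (m : ℕ) (ηinv : Matrix (Fin m) (Fin m) ℝ) (c : ℝ) (cv : Fin (m+2) → ℝ)
    (p : Fin (m+2) → ℝ) (α β γ : Fin (m+2)) : ℝ :=
  ((if α = 0 then (if γ = 1 then cv β else 0) + (if β = 1 then cv γ else 0)
      + (if β = 1 ∧ γ = 1 then -cv 1 else 0) else 0)
    + (if β = 1 ∧ γ = 1 then Kfun m ηinv cv α else 0))
    + (if α = 0 ∧ β = 1 ∧ γ = 1 then 2 * cv 0 else 0) * (c + ∑ ν, cv ν * p ν)

lemma gUp_zero (ηinv : Matrix (Fin m) (Fin m) ℝ) (h : (Fin (m+2) → ℝ) → ℝ) (p) (α : Fin (m+2)) :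
    gUp m ηinv h p α 0 = (if α = 1 then 1 else 0) + (if α = 0 then -(2 * h p) else 0) := by
  simp [gUp, fzero_ne_one, (t_ne_zero _).symm, fun b => (t_ne_zero (m := m) b).symm]

lemma gUp_one (ηinv : Matrix (Fin m) (Fin m) ℝ) (h : (Fin (m+2) → ℝ) → ℝ) (p) (α : Fin (m+2)) :
    gUp m ηinv h p α 1 = (if α = 0 then 1 else 0) := by
  simp [gUp, fone_ne_zero, fun b => (t_ne_one (m := m) b).symm]

lemma gUp_t (ηinv : Matrix (Fin m) (Fin m) ℝ) (h : (Fin (m+2) → ℝ) → ℝ) (p) (α : Fin (m+2)) (b : Fin m) :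
    gUp m ηinv h p α (tIdx b) = ∑ a : Fin m, if α = tIdx a then ηinv a b else 0 := by
  simp only [gUp, t_ne_zero, t_ne_one, and_false, if_false, or_self, t_inj]
  simp only [zero_add]
  refine Finset.sum_congr rfl fun a _ => ?_
  by_cases hα : α = tIdx a
  · simp [hα, Finset.sum_ite_eq]
  · simp [hα]

set_option maxHeartbeats 1000000 in
lemma chr_eq (η ηinv : Matrix (Fin m) (Fin m) ℝ) (c : ℝ) (cv : Fin (m+2) → ℝ)
    (p : Fin (m+2) → ℝ) (α β γ : Fin (m+2)) :
    chr m η ηinv (fun r => c + ∑ ν, cv ν * r ν) p α β γ = Gam m ηinv c cv p α β γ := by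
  have ht : ∀ a : Fin m, (Fin.succ (Fin.succ a) : Fin (m+2)) = tIdx a := fun _ => rfl
  simp only [chr, pd_gLow]
  rw [Fin.sum_univ_succ, Fin.sum_univ_succ, Fin.succ_zero_eq_one]
  simp only [ht, gUp_zero, gUp_one, gUp_t]
  simp only [fzero_ne_one, fone_ne_zero, t_ne_zero, t_ne_one, and_false, false_and, if_false,
    and_true, true_and, if_true, eq_self_iff_true]
  have hsum : (∑ x : Fin m, (∑ a : Fin m, if α = tIdx a then ηinv a x else 0) *
        (0 + 0 - if β = 1 ∧ γ = 1 then 2 * cv (tIdx x) else 0))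
      = (if β = 1 ∧ γ = 1 then (-2 : ℝ) else 0) *
        ∑ a : Fin m, (if α = tIdx a then (∑ b : Fin m, ηinv a b * cv (tIdx b)) else 0) := by
    by_cases hβγ : β = 1 ∧ γ = 1
    · simp only [if_pos hβγ]
      calc ∑ x : Fin m, (∑ a : Fin m, if α = tIdx a then ηinv a x else 0) * (0 + 0 - 2 * cv (tIdx x))
          = ∑ x : Fin m, ∑ a : Fin m,
              (if α = tIdx a then ηinv a x * (0 + 0 - 2 * cv (tIdx x)) else 0) := by
            refine Finset.sum_congr rfl fun x _ => ?_
            rw [Finset.sum_mul]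
            refine Finset.sum_congr rfl fun a _ => by split_ifs <;> ring
        _ = ∑ a : Fin m, ∑ x : Fin m,
              (if α = tIdx a then ηinv a x * (0 + 0 - 2 * cv (tIdx x)) else 0) := Finset.sum_comm
        _ = -2 * ∑ a : Fin m, (if α = tIdx a then (∑ b : Fin m, ηinv a b * cv (tIdx b)) else 0) := by
            rw [Finset.mul_sum]
            refine Finset.sum_congr rfl fun a _ => ?_
            split_ifs with hα
            · rw [Finset.mul_sum]
              refine Finset.sum_congr rfl fun b _ => by ring
            · simp
    · simp [hβγ]
  rw [hsum]
  simp only [Gam, Kfun]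
  clear hsum ht
  by_cases hα0 : α = 0
  · subst hα0
    simp only [fzero_ne_one, eq_self_iff_true, if_true, if_false, true_and, and_true]
    split_ifs <;> first | ring1 | tauto
  · simp only [hα0, if_false, false_and]
    split_ifs <;> first | ring1 | tauto

lemma Gam_t3 (ηinv : Matrix (Fin m) (Fin m) ℝ) (c : ℝ) (cv : Fin (m+2) → ℝ)
    (p : Fin (m+2) → ℝ) (α γ : Fin (m+2)) (a : Fin m) :
    Gam m ηinv c cv p α γ (tIdx a) = if α = 0 then (if γ = 1 then cv (tIdx a) else 0) else 0 := by
  simp [Gam, Kfun, t_ne_zero, t_ne_one]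

lemma Gam_t1 (ηinv : Matrix (Fin m) (Fin m) ℝ) (c : ℝ) (cv : Fin (m+2) → ℝ)
    (p : Fin (m+2) → ℝ) (δ β : Fin (m+2)) (a : Fin m) :
    Gam m ηinv c cv p (tIdx a) δ β
      = if δ = 1 ∧ β = 1 then -(∑ b : Fin m, ηinv a b * cv (tIdx b)) else 0 := by
  simp only [Gam, Kfun, t_ne_zero, t_ne_one, if_neg, if_false, zero_add, and_false, false_and]
  simp only [t_inj, Finset.sum_ite_eq, Finset.mem_univ, if_true, zero_mul, add_zero]
  split_ifs <;> ring

lemma pd_Gam (ηinv : Matrix (Fin m) (Fin m) ℝ) (c : ℝ) (cv : Fin (m+2) → ℝ)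
    (μ α β γ : Fin (m+2)) (p : Fin (m+2) → ℝ) :
    pd μ (fun q => Gam m ηinv c cv q α β γ) p
      = (if α = 0 ∧ β = 1 ∧ γ = 1 then 2 * cv 0 else 0) * cv μ := by
  rw [show (fun q => Gam m ηinv c cv q α β γ)
      = (fun q => ((if α = 0 then (if γ = 1 then cv β else 0) + (if β = 1 then cv γ else 0)
          + (if β = 1 ∧ γ = 1 then -cv 1 else 0) else 0)
        + (if β = 1 ∧ γ = 1 then Kfun m ηinv cv α else 0))
        + (if α = 0 ∧ β = 1 ∧ γ = 1 then 2 * cv 0 else 0) * (c + ∑ ν, cv ν * q ν)) from rfl,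
    pd_affine]

lemma pd_chr (η ηinv : Matrix (Fin m) (Fin m) ℝ) (c : ℝ) (cv : Fin (m+2) → ℝ)
    (μ α β γ : Fin (m+2)) (p : Fin (m+2) → ℝ) :
    pd μ (fun q => chr m η ηinv (fun r => c + ∑ ν, cv ν * r ν) q α β γ) p
      = (if α = 0 ∧ β = 1 ∧ γ = 1 then 2 * cv 0 else 0) * cv μ := by
  rw [show (fun q => chr m η ηinv (fun r => c + ∑ ν, cv ν * r ν) q α β γ)
      = (fun q => Gam m ηinv c cv q α β γ) from funext fun q => chr_eq η ηinv c cv q α β γ,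
    pd_Gam]

lemma zero_ne_t (a : Fin m) : (0 : Fin (m+2)) ≠ tIdx a := (t_ne_zero a).symm
lemma one_ne_t (a : Fin m) : (1 : Fin (m+2)) ≠ tIdx a := (t_ne_one a).symm

end AuxStmt14

set_option maxHeartbeats 1000000 in
/-- if `h(x) = c + Σ_μ c_μ x^μ` is affine in the coordinates, the
plane-fronted metric is flat: the Riemann tensor vanishes identically. -/
theorem stmt14 (m : ℕ) (hm : 1 ≤ m) (η ηinv : Matrix (Fin m) (Fin m) ℝ)
    (hηsymm : η.IsSymm) (hη : η * ηinv = 1) (hη' : ηinv * η = 1)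
    (h : (Fin (m + 2) → ℝ) → ℝ) (hh : ContDiff ℝ (⊤ : ℕ∞) h)
    (c : ℝ) (cv : Fin (m + 2) → ℝ)
    (hform : ∀ p : Fin (m + 2) → ℝ, h p = c + ∑ μ : Fin (m + 2), cv μ * p μ) :
    ∀ (p : Fin (m + 2) → ℝ) (α β γ δ : Fin (m + 2)),
      riem m η ηinv h p α β γ δ = 0 := by
  intro p α β γ δ
  have hE : h = fun r => c + ∑ ν : Fin (m + 2), cv ν * r ν := funext hform
  subst hE
  have ht : ∀ a : Fin m, (Fin.succ (Fin.succ a) : Fin (m+2)) = tIdx a := fun _ => rfl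
  simp only [riem]
  rw [pd_chr, pd_chr]
  simp only [chr_eq]
  rw [Fin.sum_univ_succ, Fin.sum_univ_succ, Fin.succ_zero_eq_one]
  simp only [ht]
  have hzero : ∀ a : Fin m, Gam m ηinv c cv p α γ (tIdx a) * Gam m ηinv c cv p (tIdx a) δ β
      - Gam m ηinv c cv p α δ (tIdx a) * Gam m ηinv c cv p (tIdx a) γ β = 0 := by
    intro a
    rw [Gam_t3, Gam_t3, Gam_t1, Gam_t1]
    split_ifs <;> first | ring1 | tauto
  simp only [hzero, Finset.sum_const_zero, add_zero]
  simp only [Gam, Kfun]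
  simp only [fzero_ne_one, fone_ne_zero, zero_ne_t, one_ne_t, eq_self_iff_true, if_true, if_false,
    and_true, true_and, and_false, false_and, and_self, Finset.sum_const_zero]
  by_cases hα0 : α = 0
  · subst hα0
    simp only [fzero_ne_one, zero_ne_t, if_false, eq_self_iff_true, if_true, true_and, and_true,
      Finset.sum_const_zero]
    split_ifs <;> first | ring1 | tauto
  · simp only [hα0, if_false, false_and]
    split_ifs <;> first | ring1 | tauto
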